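/- arXiv:0906.0186 — 2 statements merged into one kernel-verified Lean document; each statement's English description precedes it below -/
import Mathlib

section
/- To any nonzero n×n matrix M over L attach the triple of integers (v(M), d(M), c(M)), where v(M) is the minimum of the valuations of the entries of M, d(M) = min{ n + j − i : val(M_{ij}) = v(M) }, and c(M) = min{ j : val(M_{(j − d(M) + n), j}) = v(M) }. Then for every n×n matrix N over L of Iwahori form, the triples attached to N·M and to M·N both equal the triple attached to M. -/
noncomputable section

open Matrix

/-- The ε-adic valuation on `L = k̄((ε))`, with `val 0 = ∞`. -/
def val {K : Type*} [Field K] (x : LaurentSeries K) : WithTop ℤ := x.orderTop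

/-- A square matrix over `L = k̄((ε))` is of Iwahori form. -/
def IwahoriForm {K : Type*} [Field K] {n : ℕ}
    (M : Matrix (Fin n) (Fin n) (LaurentSeries K)) : Prop :=
  (∀ i, val (M i i) = 0) ∧
  (∀ i j : Fin n, i < j → 0 ≤ val (M i j)) ∧
  (∀ i j : Fin n, j < i → 1 ≤ val (M i j))

/-- `(v, d, c)` is the triple of integers attached to the matrix `M`:
`v` is the minimum of the valuations of the entries of `M`; `d = min { n + j − i :
val (M i j) = v }` is the number of the first diagonal (counted from the bottom-left)
containing an entry of valuation `v`; and `c` is the minimal column number of an entry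
of valuation `v` on diagonal `d`.  (Rows and columns are numbered `1, …, n`, so the
column number of `j : Fin n` is `j + 1`; the quantity `n + j − i` is the same in both
the `0`-indexed and `1`-indexed conventions.) -/
def IsTriple {K : Type*} [Field K] {n : ℕ}
    (M : Matrix (Fin n) (Fin n) (LaurentSeries K)) (v d c : ℤ) : Prop :=
  (∀ i j : Fin n, (v : WithTop ℤ) ≤ val (M i j)) ∧
  (∃ i j : Fin n, val (M i j) = (v : WithTop ℤ)) ∧
  (∀ i j : Fin n, val (M i j) = (v : WithTop ℤ) → d ≤ (n : ℤ) + (j : ℤ) - (i : ℤ)) ∧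
  (∃ i j : Fin n, val (M i j) = (v : WithTop ℤ) ∧ d = (n : ℤ) + (j : ℤ) - (i : ℤ)) ∧
  (∀ i j : Fin n, val (M i j) = (v : WithTop ℤ) → (n : ℤ) + (j : ℤ) - (i : ℤ) = d →
    c ≤ (j : ℤ) + 1) ∧
  (∃ i j : Fin n, val (M i j) = (v : WithTop ℤ) ∧ (n : ℤ) + (j : ℤ) - (i : ℤ) = d ∧
    c = (j : ℤ) + 1)

section Aux
variable {K : Type*} [Field K]

lemma val_mul (x y : LaurentSeries K) : val (x * y) = val x + val y := by
  have h := (HahnSeries.addVal ℤ K).map_mul x y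
  rw [HahnSeries.addVal_apply, HahnSeries.addVal_apply, HahnSeries.addVal_apply] at h
  exact h

lemma le_val_sum {ι : Type*} (s : Finset ι) (f : ι → LaurentSeries K) (a : WithTop ℤ)
    (h : ∀ i ∈ s, a ≤ val (f i)) : a ≤ val (∑ i ∈ s, f i) := by
  induction s using Finset.cons_induction with
  | empty => simp [val]
  | cons i s hi ih =>
    rw [Finset.sum_cons]
    exact le_trans (le_min (h i (Finset.mem_cons_self i s))
      (ih fun j hj => h j (Finset.mem_cons_of_mem hj)))
      HahnSeries.min_orderTop_le_orderTop_add

lemma lt_val_sum {ι : Type*} (s : Finset ι) (f : ι → LaurentSeries K) (a : ℤ)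
    (h : ∀ i ∈ s, (a : WithTop ℤ) < val (f i)) : (a : WithTop ℤ) < val (∑ i ∈ s, f i) := by
  induction s using Finset.cons_induction with
  | empty => simp only [Finset.sum_empty, val, HahnSeries.orderTop_zero]; exact WithTop.coe_lt_top a
  | cons i s hi ih =>
    rw [Finset.sum_cons]
    exact lt_of_lt_of_le (lt_min (h i (Finset.mem_cons_self i s))
      (ih fun j hj => h j (Finset.mem_cons_of_mem hj)))
      HahnSeries.min_orderTop_le_orderTop_add

lemma val_add_left {x y : LaurentSeries K} (h : val x < val y) : val (x + y) = val x :=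
  HahnSeries.orderTop_add_eq_left h

lemma term_lt {v : ℤ} {x y : LaurentSeries K} (hx : 0 ≤ val x) (hy : (v : WithTop ℤ) ≤ val y)
    (h : 1 ≤ val x ∨ (v : WithTop ℤ) < val y) : (v : WithTop ℤ) < val x + val y := by
  rcases h with h | h
  · calc (v : WithTop ℤ) < 1 + (v : WithTop ℤ) := by
          rw [← WithTop.coe_one, ← WithTop.coe_add]; exact_mod_cast lt_one_add v
      _ ≤ val x + val y := add_le_add h hy
  · exact lt_of_lt_of_le h (le_add_of_nonneg_left hx)

end Aux

section Main
variable {K : Type*} [Field K] {n : ℕ}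

lemma iwahori_val_nonneg {N : Matrix (Fin n) (Fin n) (LaurentSeries K)}
    (hN : IwahoriForm N) (i k : Fin n) : 0 ≤ val (N i k) := by
  rcases lt_trichotomy i k with hik | hik | hik
  · exact hN.2.1 i k hik
  · rw [hik, hN.1 k]
  · exact le_trans zero_le_one (hN.2.2 i k hik)

lemma left_mult {M N : Matrix (Fin n) (Fin n) (LaurentSeries K)}
    (hN : IwahoriForm N) {v d c : ℤ} (h : IsTriple M v d c) : IsTriple (N * M) v d c := by
  obtain ⟨h1, h2, h3, h4, h5, h6⟩ := h
  obtain ⟨i₀, j₀, hval, hd, hc⟩ := h6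
  have hN0 := iwahori_val_nonneg hN
  -- valuation lower bound
  have hlow : ∀ i j : Fin n, (v : WithTop ℤ) ≤ val ((N * M) i j) := by
    intro i j
    rw [Matrix.mul_apply]
    refine le_val_sum _ _ _ fun k _ => ?_
    rw [val_mul]
    exact le_trans (zero_add ((v : ℤ) : WithTop ℤ)).symm.le (add_le_add (hN0 i k) (h1 k j))
  -- the witness entry
  have hwit : val ((N * M) i₀ j₀) = (v : WithTop ℤ) := by
    rw [Matrix.mul_apply, ← Finset.add_sum_erase Finset.univ _ (Finset.mem_univ i₀)]
    have hx : val (N i₀ i₀ * M i₀ j₀) = (v : WithTop ℤ) := by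
      rw [val_mul, hN.1 i₀, hval, zero_add]
    have hy : (v : WithTop ℤ) < val (∑ k ∈ Finset.univ.erase i₀, N i₀ k * M k j₀) := by
      refine lt_val_sum _ _ _ fun k hk => ?_
      rw [val_mul]
      rcases lt_or_gt_of_ne (Finset.ne_of_mem_erase hk) with hlt | hgt
      · exact term_lt (hN0 _ _) (h1 _ _) (Or.inl (hN.2.2 i₀ k hlt))
      · refine term_lt (hN0 _ _) (h1 _ _) (Or.inr (lt_of_le_of_ne (h1 k j₀) (Ne.symm fun hvk => ?_)))
        have h3k := h3 k j₀ hvk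
        have hki : (i₀ : ℕ) < (k : ℕ) := hgt
        omega
    rw [val_add_left (lt_of_le_of_lt hx.le hy), hx]
  -- extraction
  have extract : ∀ i j : Fin n, val ((N * M) i j) = (v : WithTop ℤ) →
      ∃ k : Fin n, i ≤ k ∧ val (M k j) = (v : WithTop ℤ) := by
    intro i j hij
    by_contra hcon
    push_neg at hcon
    have hall : ∀ k ∈ (Finset.univ : Finset (Fin n)), (v : WithTop ℤ) < val (N i k * M k j) := by
      intro k _
      rw [val_mul]
      rcases lt_or_ge k i with hk | hk
      · exact term_lt (hN0 _ _) (h1 _ _) (Or.inl (hN.2.2 i k hk))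
      · exact term_lt (hN0 _ _) (h1 _ _)
          (Or.inr (lt_of_le_of_ne (h1 k j) (Ne.symm (hcon k hk))))
    have hlt := lt_val_sum Finset.univ _ v hall
    rw [Matrix.mul_apply] at hij
    rw [hij] at hlt
    exact lt_irrefl _ hlt
  refine ⟨hlow, ⟨i₀, j₀, hwit⟩, ?_, ⟨i₀, j₀, hwit, hd.symm⟩, ?_, ⟨i₀, j₀, hwit, hd, hc⟩⟩
  · intro i j hij
    obtain ⟨k, hik, hkv⟩ := extract i j hij
    have h3k := h3 k j hkv
    have hik' : (i : ℕ) ≤ (k : ℕ) := hik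
    omega
  · intro i j hij heq
    obtain ⟨k, hik, hkv⟩ := extract i j hij
    have h3k := h3 k j hkv
    have hik' : (i : ℕ) ≤ (k : ℕ) := hik
    have hki : k = i := by
      apply Fin.ext
      omega
    subst hki
    exact h5 k j hkv heq

lemma right_mult {M N : Matrix (Fin n) (Fin n) (LaurentSeries K)}
    (hN : IwahoriForm N) {v d c : ℤ} (h : IsTriple M v d c) : IsTriple (M * N) v d c := by
  obtain ⟨h1, h2, h3, h4, h5, h6⟩ := h
  obtain ⟨i₀, j₀, hval, hd, hc⟩ := h6
  have hN0 := iwahori_val_nonneg hN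
  have hlow : ∀ i j : Fin n, (v : WithTop ℤ) ≤ val ((M * N) i j) := by
    intro i j
    rw [Matrix.mul_apply]
    refine le_val_sum _ _ _ fun k _ => ?_
    rw [val_mul, add_comm]
    exact le_trans (zero_add ((v : ℤ) : WithTop ℤ)).symm.le (add_le_add (hN0 k j) (h1 i k))
  have hwit : val ((M * N) i₀ j₀) = (v : WithTop ℤ) := by
    rw [Matrix.mul_apply, ← Finset.add_sum_erase Finset.univ _ (Finset.mem_univ j₀)]
    have hx : val (M i₀ j₀ * N j₀ j₀) = (v : WithTop ℤ) := by
      rw [val_mul, hN.1 j₀, hval, add_zero]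
    have hy : (v : WithTop ℤ) < val (∑ k ∈ Finset.univ.erase j₀, M i₀ k * N k j₀) := by
      refine lt_val_sum _ _ _ fun k hk => ?_
      rw [val_mul, add_comm]
      rcases lt_or_gt_of_ne (Finset.ne_of_mem_erase hk) with hlt | hgt
      · -- k < j₀ : diagonal below d
        refine term_lt (hN0 _ _) (h1 _ _) (Or.inr (lt_of_le_of_ne (h1 i₀ k) (Ne.symm fun hvk => ?_)))
        have h3k := h3 i₀ k hvk
        have hkj : (k : ℕ) < (j₀ : ℕ) := hlt
        omega
      · exact term_lt (hN0 _ _) (h1 _ _) (Or.inl (hN.2.2 k j₀ hgt))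
    rw [val_add_left (lt_of_le_of_lt hx.le hy), hx]
  have extract : ∀ i j : Fin n, val ((M * N) i j) = (v : WithTop ℤ) →
      ∃ k : Fin n, k ≤ j ∧ val (M i k) = (v : WithTop ℤ) := by
    intro i j hij
    by_contra hcon
    push_neg at hcon
    have hall : ∀ k ∈ (Finset.univ : Finset (Fin n)), (v : WithTop ℤ) < val (M i k * N k j) := by
      intro k _
      rw [val_mul, add_comm]
      rcases lt_or_ge j k with hk | hk
      · exact term_lt (hN0 _ _) (h1 _ _) (Or.inl (hN.2.2 k j hk))
      · exact term_lt (hN0 _ _) (h1 _ _)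
          (Or.inr (lt_of_le_of_ne (h1 i k) (Ne.symm (hcon k hk))))
    have hlt := lt_val_sum Finset.univ _ v hall
    rw [Matrix.mul_apply] at hij
    rw [hij] at hlt
    exact lt_irrefl _ hlt
  refine ⟨hlow, ⟨i₀, j₀, hwit⟩, ?_, ⟨i₀, j₀, hwit, hd.symm⟩, ?_, ⟨i₀, j₀, hwit, hd, hc⟩⟩
  · intro i j hij
    obtain ⟨k, hkj, hkv⟩ := extract i j hij
    have h3k := h3 i k hkv
    have hkj' : (k : ℕ) ≤ (j : ℕ) := hkj
    omega
  · intro i j hij heq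
    obtain ⟨k, hkj, hkv⟩ := extract i j hij
    have h3k := h3 i k hkv
    have hkj' : (k : ℕ) ≤ (j : ℕ) := hkj
    have hkk : k = j := by
      apply Fin.ext
      omega
    subst hkk
    exact h5 i k hkv heq

end Main

/-- the triple of integers `(v, d, c)` attached to a nonzero matrix `M` is
invariant under left and right multiplication by matrices of Iwahori form. -/
theorem triple_invariant (F : Type*) [Field F] [Fintype F] (n : ℕ)
    (M N : Matrix (Fin n) (Fin n) (LaurentSeries (AlgebraicClosure F)))
    (hM : M ≠ 0) (hN : IwahoriForm N) (v d c : ℤ) (h : IsTriple M v d c) :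
    IsTriple (N * M) v d c ∧ IsTriple (M * N) v d c :=
  ⟨left_mult hN h, right_mult hN h⟩
end
end

section
/- For every integer r > 0 and every a ∈ L, there exists y ∈ L such that ε^r·σ(y) − y = a. Moreover, if a ∈ o_L then y can be taken in o_L. -/
/-! Comparing coefficients of `ε^r σ(y) - y = a` at `εⁿ` gives `yₙ = (y_{n-r})^q - aₙ`. Since
`r > 0`, this recursion determines all coefficients of `y` from the choice `yₙ = 0` for `n` below
any `N` under which the coefficients of `a` vanish; the resulting series then satisfies the
equation and has valuation at least `N`. Taking `N = 0` when `a ∈ o_L` gives `y ∈ o_L`. -/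

noncomputable section

/-- The uniformizer ε of the Laurent series field. -/
def eps (K : Type*) [Field K] : LaurentSeries K := HahnSeries.single 1 1

/-- `σ : L → L` is the Frobenius automorphism: it fixes ε and raises each Laurent-series
coefficient to the `q`-th power.  (This property determines `σ` uniquely.) -/
def IsFrobenius (K : Type*) [Field K] (q : ℕ)
    (σ : LaurentSeries K → LaurentSeries K) : Prop :=
  ∀ (x : LaurentSeries K) (n : ℤ), (σ x).coeff n = (x.coeff n) ^ q

section ArtinSchreier

variable {K : Type*} [Field K]

theorem coeff_eps_zpow_mul (r n : ℤ) (x : LaurentSeries K) :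
    (eps K ^ r * x).coeff n = x.coeff (n - r) := by
  rw [eps, ← RatFunc.single_zpow, HahnSeries.coeff_single_mul, one_mul]

theorem le_val_iff {N : ℤ} {x : LaurentSeries K} :
    (N : WithTop ℤ) ≤ val x ↔ ∀ n < N, x.coeff n = 0 := by
  simp only [val, HahnSeries.le_orderTop_iff_forall, WithTop.coe_lt_coe]

theorem order_le_val (x : LaurentSeries K) : (x.order : WithTop ℤ) ≤ val x :=
  le_val_iff.mpr fun _ => HahnSeries.coeff_eq_zero_of_lt_order

def artinSchreierCoeff (q : ℕ) (r : ℤ) (hr : 0 < r) (N : ℤ) (a : LaurentSeries K) (n : ℤ) : K :=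
  if n < N then 0 else artinSchreierCoeff q r hr N a (n - r) ^ q - a.coeff n
termination_by (n + 1 - N).toNat
decreasing_by omega

variable (q : ℕ) {r : ℤ} (hr : 0 < r) (N : ℤ) (a : LaurentSeries K)

theorem artinSchreierCoeff_of_lt {n : ℤ} (hn : n < N) : artinSchreierCoeff q r hr N a n = 0 := by
  rw [artinSchreierCoeff, if_pos hn]

theorem artinSchreierCoeff_of_le {n : ℤ} (hn : N ≤ n) :
    artinSchreierCoeff q r hr N a n = artinSchreierCoeff q r hr N a (n - r) ^ q - a.coeff n := by
  rw [artinSchreierCoeff, if_neg (not_lt.mpr hn)]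

def artinSchreierSol : LaurentSeries K :=
  HahnSeries.ofSuppBddBelow (artinSchreierCoeff q r hr N a) ⟨N, fun _ hn =>
    not_lt.mp fun hlt => hn (artinSchreierCoeff_of_lt q hr N a hlt)⟩

theorem le_val_artinSchreierSol : (N : WithTop ℤ) ≤ val (artinSchreierSol q hr N a) :=
  le_val_iff.mpr fun _ => artinSchreierCoeff_of_lt q hr N a

theorem eps_zpow_mul_sub_artinSchreierSol {σ : LaurentSeries K → LaurentSeries K}
    (hσ : IsFrobenius K q σ) (hq : q ≠ 0) (ha : (N : WithTop ℤ) ≤ val a) :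
    eps K ^ r * σ (artinSchreierSol q hr N a) - artinSchreierSol q hr N a = a := by
  ext n
  rw [HahnSeries.coeff_sub, coeff_eps_zpow_mul, hσ]
  change artinSchreierCoeff q r hr N a (n - r) ^ q - artinSchreierCoeff q r hr N a n = a.coeff n
  rcases lt_or_ge n N with hn | hn
  · rw [artinSchreierCoeff_of_lt q hr N a hn, artinSchreierCoeff_of_lt q hr N a (by omega),
      le_val_iff.mp ha n hn, zero_pow hq, sub_zero]
  · rw [artinSchreierCoeff_of_le q hr N a hn, sub_sub_cancel]

end ArtinSchreier

/-- for every integer `r > 0` and every `a ∈ L` the equation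
`ε^r·σ(y) − y = a` has a solution `y ∈ L`; moreover if `a ∈ o_L` then `y` can be taken
in `o_L`. -/
theorem artin_schreier_type_equation_solvable (F : Type*) [Field F] [Fintype F]
    (σ : LaurentSeries (AlgebraicClosure F) → LaurentSeries (AlgebraicClosure F))
    (hσ : IsFrobenius (AlgebraicClosure F) (Fintype.card F) σ)
    (r : ℤ) (hr : 0 < r) (a : LaurentSeries (AlgebraicClosure F)) :
    ∃ y : LaurentSeries (AlgebraicClosure F),
      eps (AlgebraicClosure F) ^ r * σ y - y = a ∧
      (0 ≤ val a → 0 ≤ val y) := by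
  have hq : Fintype.card F ≠ 0 := Fintype.card_ne_zero
  by_cases ha : 0 ≤ val a
  · exact ⟨artinSchreierSol _ hr 0 a, eps_zpow_mul_sub_artinSchreierSol _ hr 0 a hσ hq ha,
      fun _ => le_val_artinSchreierSol _ hr 0 a⟩
  · exact ⟨artinSchreierSol _ hr a.order a,
      eps_zpow_mul_sub_artinSchreierSol _ hr a.order a hσ hq (order_le_val a),
      fun h => absurd h ha⟩
end
end
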